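/- Let a : ℕ → ℤ and let k be a positive integer such that |a(t+1) − a(t)| ≤ k for all t ∈ ℕ. Let i, i₁, p be natural numbers with i₁ ≤ i and i − i₁ < 2^p, and let x be an integer with k·2^p ≤ a(i) − x < k·2^(p+1). Then 0 < a(i₁) − x < 3·k·2^p. -/

import Mathlib

theorem abs_sub_le_nsmul_of_abs_succ_sub_le {α : Type*} [AddCommGroup α] [LinearOrder α]
    [IsOrderedAddMonoid α] {a : ℕ → α} {k : α} (hstep : ∀ t, |a (t + 1) - a t| ≤ k)
    (n d : ℕ) : |a (n + d) - a n| ≤ d • k := by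
  induction d with
  | zero => simp
  | succ d ih =>
    calc |a (n + (d + 1)) - a n|
        = |(a (n + d + 1) - a (n + d)) + (a (n + d) - a n)| := by
          rw [← add_assoc, sub_add_sub_cancel]
      _ ≤ |a (n + d + 1) - a (n + d)| + |a (n + d) - a n| := abs_add_le _ _
      _ ≤ k + d • k := add_le_add (hstep _) ih
      _ = (d + 1) • k := by rw [succ_nsmul']

theorem stmt_9_general (a : ℕ → ℤ) (k : ℤ)
    (hstep : ∀ t : ℕ, |a (t + 1) - a t| ≤ k)
    (i i₁ p : ℕ) (h₁ : i₁ ≤ i) (h₂ : i - i₁ < 2 ^ p)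
    (x : ℤ) (hx₁ : k * 2 ^ p ≤ a i - x) (hx₂ : a i - x < k * 2 ^ (p + 1)) :
    0 < a i₁ - x ∧ a i₁ - x < 3 * k * 2 ^ p := by
  obtain ⟨d, rfl⟩ := Nat.exists_eq_add_of_le h₁
  rw [pow_succ] at hx₂
  have hk : 0 < k := by
    have : 0 < k * 2 ^ p := by linarith
    exact pos_of_mul_pos_left this (by positivity)
  have hd : (d : ℤ) + 1 ≤ 2 ^ p := by exact_mod_cast (show d < 2 ^ p by omega)
  have hkd : k * (d + 1) ≤ k * 2 ^ p := mul_le_mul_of_nonneg_left hd hk.le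
  have hdrift := abs_le.mp (abs_sub_le_nsmul_of_abs_succ_sub_le hstep i₁ d)
  rw [nsmul_eq_mul] at hdrift
  constructor <;> linarith [hdrift.1, hdrift.2]

/-- in the two-level structure, the offset `a i₁ - x` lies
strictly between `0` and `3·k·2^p`. -/
theorem stmt_9 (a : ℕ → ℤ) (k : ℤ) (hk : 0 < k)
    (hstep : ∀ t : ℕ, |a (t + 1) - a t| ≤ k)
    (i i₁ p : ℕ) (h₁ : i₁ ≤ i) (h₂ : i - i₁ < 2 ^ p)
    (x : ℤ) (hx₁ : k * 2 ^ p ≤ a i - x) (hx₂ : a i - x < k * 2 ^ (p + 1)) :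
    0 < a i₁ - x ∧ a i₁ - x < 3 * k * 2 ^ p :=
  stmt_9_general a k hstep i i₁ p h₁ h₂ x hx₁ hx₂
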